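/- arXiv:1707.00782 — 10 statements merged into one kernel-verified Lean document; each statement's English description precedes it below -/
import Mathlib

section
/- Let t be a nonnegative integer and n ≥ 6t+2 a positive integer. Then 2n−1 does not belong to S_{n,t}. -/
/-- The generating set `G_{n,t}`. -/
def Gset (n t : ℕ) : Set ℕ :=
  {m | (∃ i < t, m = n - 2*t + 4*i ∨ m = n - 2*t + 4*i + 1) ∨
       (n + 2*t ≤ m ∧ m ≤ 2*n - 4*t - 2) ∨
       (∃ j < t, m = 2*n - 4*t + 4*j - 1)}

/-- The numerical semigroup `S_{n,t}`, the additive submonoid of ℕ generated by `G_{n,t}`. -/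
def Sgen (n t : ℕ) : AddSubmonoid ℕ := AddSubmonoid.closure (Gset n t)

/-! Every generator is at least `n - 2t`, so `2n - 1 < 3(n - 2t)` can only be `0`, a generator
or a sum of two generators. It is not a generator, and two generators cannot sum to it: the sum
of two small generators `n - 2t + 4i + e` and `n - 2t + 4j + f` (`e, f ≤ 1`) would force
`4(i + j) + e + f = 4t - 1`, while any other pair sums to at least `2n`. -/

theorem AddSubmonoid.mem_closure_nat_of_lt_three_mul {s : Set ℕ} {m x : ℕ}
    (hs : ∀ g ∈ s, m ≤ g) (hx : x ∈ AddSubmonoid.closure s) (hlt : x < 3 * m) :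
    x = 0 ∨ x ∈ s ∨ ∃ a ∈ s, ∃ b ∈ s, a + b = x := by
  obtain ⟨l, hl, rfl⟩ := AddSubmonoid.exists_list_of_mem_closure hx
  match l, hl with
  | [], _ => exact Or.inl rfl
  | [a], hl => exact Or.inr (Or.inl (by simpa using hl a))
  | [a, b], hl => exact Or.inr (Or.inr ⟨a, hl a (by simp), b, hl b (by simp), by simp⟩)
  | a :: b :: c :: l, hl =>
    have ha := hs a (hl a (by simp))
    have hb := hs b (hl b (by simp))
    have hc := hs c (hl c (by simp))
    simp only [List.sum_cons] at hlt
    omega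

namespace Gset

variable {n t g : ℕ}

theorem sub_le_of_mem (hg : g ∈ Gset n t) : n - 2*t ≤ g := by
  rcases hg with ⟨i, hi, hg | hg⟩ | ⟨h1, h2⟩ | ⟨j, hj, hg⟩ <;> omega

theorem eq_or_le_of_mem (hn : 6*t + 2 ≤ n) (hg : g ∈ Gset n t) :
    (∃ i < t, ∃ e ≤ 1, g = n - 2*t + 4*i + e) ∨ n + 2*t ≤ g := by
  rcases hg with ⟨i, hi, hg | hg⟩ | ⟨h1, -⟩ | ⟨j, hj, hg⟩
  · exact Or.inl ⟨i, hi, 0, zero_le_one, hg⟩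
  · exact Or.inl ⟨i, hi, 1, le_rfl, hg⟩
  · exact Or.inr h1
  · right; omega

theorem two_mul_sub_one_notMem (hn : 6*t + 2 ≤ n) : 2*n - 1 ∉ Gset n t := by
  rintro (⟨i, hi, hg | hg⟩ | ⟨h1, h2⟩ | ⟨j, hj, hg⟩) <;> omega

theorem add_ne_two_mul_sub_one (hn : 6*t + 2 ≤ n) {a b : ℕ} (ha : a ∈ Gset n t) (hb : b ∈ Gset n t) :
    a + b ≠ 2*n - 1 := by
  rcases eq_or_le_of_mem hn ha with ⟨i, hi, e, he, rfl⟩ | ha' <;>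
  rcases eq_or_le_of_mem hn hb with ⟨j, hj, f, hf, rfl⟩ | hb' <;> omega

end Gset

theorem stmt_1 (t n : ℕ) (hn : 6*t + 2 ≤ n) :
    2*n - 1 ∉ Sgen n t := by
  intro h
  rcases AddSubmonoid.mem_closure_nat_of_lt_three_mul (fun _ => Gset.sub_le_of_mem) h
      (by omega) with h0 | hg | ⟨a, ha, b, hb, hab⟩
  · omega
  · exact Gset.two_mul_sub_one_notMem hn hg
  · exact Gset.add_ne_two_mul_sub_one hn ha hb hab
end

section
/- Let t be a nonnegative integer and n ≥ 6t+2 a positive integer. The numerical semigroup S_{n,t} is symmetric with Frobenius number 2n−1: for every natural number m ≤ 2n−1, m belongs to S_{n,t} if and only if 2n−1−m does not belong to S_{n,t}. -/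
/-!
Below `2n` the semigroup is explicit: besides `0` it contains the points of the window
`[n - 2t, n + 2t)` whose offset from `n - 2t` is `0` or `1` mod `4`, and the whole interval
`[n + 2t, 2n - 2]`. The inclusion `⊆` holds because this set together with `[2n, ∞)` is closed
under addition once `n ≥ 6t + 2`; for `⊇`, the part of the interval above `2n - 4t - 2` is
covered by the generators `2n - 4t + 4j - 1` and by sums of two window points. The involution
`m ↦ 2n - 1 - m` swaps `[1, n - 2t)` with `[n + 2t, 2n - 2]` and `0` with `2n - 1`, and maps
the window onto itself, turning offsets `0, 1` mod `4` into `3, 2`.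
-/

def InWindow (n t m : ℕ) : Prop :=
  n - 2*t ≤ m ∧ m < n + 2*t ∧ (m - (n - 2*t)) % 4 ≤ 1

def Envelope (n t m : ℕ) : Prop :=
  m = 0 ∨ InWindow n t m ∨ (n + 2*t ≤ m ∧ m ≤ 2*n - 2) ∨ 2*n ≤ m

section

variable {n t : ℕ}

lemma mem_Gset_of_inWindow {m : ℕ} (hm : InWindow n t m) : m ∈ Gset n t := by
  unfold InWindow at hm
  exact Or.inl ⟨(m - (n - 2*t)) / 4, by omega, by omega⟩

lemma envelope_of_mem_Gset (hn : 6*t + 2 ≤ n) {m : ℕ} (hm : m ∈ Gset n t) : Envelope n t m := by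
  rcases hm with ⟨i, hi, hm⟩ | ⟨h₁, h₂⟩ | ⟨j, hj, rfl⟩
  · right; left; unfold InWindow; omega
  · right; right; left; omega
  · right; right; left; omega

lemma envelope_add (hn : 6*t + 2 ≤ n) {x y : ℕ} (hx : Envelope n t x) (hy : Envelope n t y) :
    Envelope n t (x + y) := by
  unfold Envelope InWindow at *
  omega

lemma envelope_of_mem_Sgen (hn : 6*t + 2 ≤ n) {m : ℕ} (hm : m ∈ Sgen n t) : Envelope n t m :=
  AddSubmonoid.closure_induction (fun _ hx => envelope_of_mem_Gset hn hx) (Or.inl rfl)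
    (fun _ _ _ _ hx hy => envelope_add hn hx hy) hm

lemma mem_Sgen_of_inWindow {m : ℕ} (hm : InWindow n t m) : m ∈ Sgen n t :=
  AddSubmonoid.subset_closure (mem_Gset_of_inWindow hm)

lemma mem_Sgen_of_le_of_le (hn : 6*t + 2 ≤ n) {m : ℕ} (h₁ : n + 2*t ≤ m) (h₂ : m ≤ 2*n - 2) :
    m ∈ Sgen n t := by
  by_cases hmid : m ≤ 2*n - 4*t - 2
  · exact AddSubmonoid.subset_closure (Or.inr (Or.inl ⟨h₁, hmid⟩))
  set d := m - (2*n - 4*t - 1)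
  by_cases hd : d % 4 = 0
  · exact AddSubmonoid.subset_closure (Or.inr (Or.inr ⟨d / 4, by omega, by omega⟩))
  -- the residue `d % 4 ∈ {1, 2, 3}` is `1 + (0 + 0)`, `1 + (1 + 0)` or `1 + (1 + 1)`
  have ha : InWindow n t (n - 2*t + 4*(d/4) + d % 4 / 2) := by unfold InWindow; omega
  have hb : InWindow n t (n - 2*t + d % 4 / 3) := by unfold InWindow; omega
  have hab : m = (n - 2*t + 4*(d/4) + d % 4 / 2) + (n - 2*t + d % 4 / 3) := by omega
  rw [hab]
  exact add_mem (mem_Sgen_of_inWindow ha) (mem_Sgen_of_inWindow hb)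

lemma mem_Sgen_iff (hn : 6*t + 2 ≤ n) {m : ℕ} (hm : m ≤ 2*n - 1) :
    m ∈ Sgen n t ↔ m = 0 ∨ InWindow n t m ∨ (n + 2*t ≤ m ∧ m ≤ 2*n - 2) := by
  constructor
  · intro h
    rcases envelope_of_mem_Sgen hn h with h | h | h | h
    · exact Or.inl h
    · exact Or.inr (Or.inl h)
    · exact Or.inr (Or.inr h)
    · omega
  · rintro (rfl | h | ⟨h₁, h₂⟩)
    · exact zero_mem _
    · exact mem_Sgen_of_inWindow h
    · exact mem_Sgen_of_le_of_le hn h₁ h₂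

end

theorem stmt_5 (t n : ℕ) (hn : 6*t + 2 ≤ n) :
    ∀ m : ℕ, m ≤ 2*n - 1 → (m ∈ Sgen n t ↔ (2*n - 1 - m) ∉ Sgen n t) := by
  intro m hm
  rw [mem_Sgen_iff hn hm, mem_Sgen_iff hn (Nat.sub_le _ _)]
  unfold InWindow
  omega
end

section
/- Let g : ℝ → ℝ be differentiable, let a ≤ b be reals, let m ≥ 1, and let r_1 < r_2 < … < r_m be points of [a,b] with g(r_i) = 0 for all i. Let d be the number of indices i with g'(r_i) = 0. Then the set {x ∈ [a,b] : g'(x) = 0} has at least m − 1 + d elements. -/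
open scoped Classical

theorem stmt_6 (g : ℝ → ℝ) (hg : Differentiable ℝ g) (a b : ℝ) (hab : a ≤ b)
    (m : ℕ) (hm : 1 ≤ m) (r : Fin m → ℝ) (hr : StrictMono r)
    (hmem : ∀ i, r i ∈ Set.Icc a b) (hroot : ∀ i, g (r i) = 0)
    (d : ℕ) (hd : d = (Finset.univ.filter (fun i : Fin m => deriv g (r i) = 0)).card) :
    ∃ s : Finset ℝ, (∀ x ∈ s, x ∈ Set.Icc a b ∧ deriv g x = 0) ∧ m - 1 + d ≤ s.card := by
  have hlt : ∀ i : Fin (m-1), (i : ℕ) < m := fun i => lt_of_lt_of_le i.isLt (Nat.sub_le m 1)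
  have hlt' : ∀ i : Fin (m-1), (i : ℕ) + 1 < m := fun i => by
    have := i.isLt; omega
  set e : Fin (m-1) → Fin m := fun i => ⟨i, hlt i⟩ with he
  set e' : Fin (m-1) → Fin m := fun i => ⟨i+1, hlt' i⟩ with he'
  have key : ∀ i : Fin (m-1), ∃ x ∈ Set.Ioo (r (e i)) (r (e' i)), deriv g x = 0 := by
    intro i
    apply exists_deriv_eq_zero (f := g)
    · exact hr (by simp [e, e', Fin.lt_def])
    · exact hg.continuous.continuousOn
    · rw [hroot, hroot]
  choose c hc1 hc2 using key
  have hcmono : StrictMono c := by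
    intro i j hij
    calc c i < r (e' i) := (hc1 i).2
    _ ≤ r (e j) := hr.monotone (by simp [e, e', Fin.le_def]; omega)
    _ < c j := (hc1 j).1
  refine ⟨Finset.image c Finset.univ ∪
      Finset.image r (Finset.univ.filter (fun i : Fin m => deriv g (r i) = 0)), ?_, ?_⟩
  · intro x hx
    rcases Finset.mem_union.1 hx with hx | hx
    · obtain ⟨i, _, rfl⟩ := Finset.mem_image.1 hx
      refine ⟨⟨le_of_lt (lt_of_le_of_lt (hmem (e i)).1 (hc1 i).1),
        le_of_lt (lt_of_lt_of_le (hc1 i).2 (hmem (e' i)).2)⟩, hc2 i⟩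
    · obtain ⟨i, hi, rfl⟩ := Finset.mem_image.1 hx
      exact ⟨hmem i, (Finset.mem_filter.1 hi).2⟩
  · have hdisj : Disjoint (Finset.image c Finset.univ)
        (Finset.image r (Finset.univ.filter (fun i : Fin m => deriv g (r i) = 0))) := by
      rw [Finset.disjoint_left]
      intro x hx hx'
      obtain ⟨i, _, rfl⟩ := Finset.mem_image.1 hx
      obtain ⟨j, _, hj⟩ := Finset.mem_image.1 hx'
      have h1 : r (e i) < r j := by rw [hj]; exact (hc1 i).1
      have h2 : r j < r (e' i) := by rw [hj]; exact (hc1 i).2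
      have g1 := hr.lt_iff_lt.1 h1
      have g2 := hr.lt_iff_lt.1 h2
      simp only [e, e', Fin.lt_def] at g1 g2
      omega
    rw [Finset.card_union_of_disjoint hdisj,
        Finset.card_image_of_injective _ hcmono.injective,
        Finset.card_image_of_injective _ hr.injective,
        Finset.card_univ, Fintype.card_fin]
    omega
end

section
/- Let t be a nonnegative integer and n ≥ 6t+2 a positive integer. Then Q_{n,t}(θ) ≠ 0 for every θ in the interval [0, 1/(2t+4)] and for every θ in the interval [2π − 1/(2t+4), 2π). -/
/-- `Q_{n,t}(θ) = 2cos(nθ) - 2cos((n-1)θ) + cos((2t+1)θ)/cos(θ)`. -/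
noncomputable def Q (n t : ℕ) (θ : ℝ) : ℝ :=
  2 * Real.cos (n * θ) - 2 * Real.cos (((n : ℝ) - 1) * θ) +
    Real.cos ((2*(t : ℝ) + 1) * θ) / Real.cos θ

lemma Q_pos (t n : ℕ) {θ : ℝ} (h0 : 0 ≤ θ) (h1 : θ ≤ 1 / (2*(t : ℝ) + 4)) :
    0 < Q n t θ := by
  have ht : (0:ℝ) < 2*(t:ℝ)+4 := by positivity
  have hε : 1/(2*(t:ℝ)+4) ≤ 1/4 := by
    apply one_div_le_one_div_of_le (by norm_num)
    have : (0:ℝ) ≤ (t:ℝ) := Nat.cast_nonneg t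
    linarith
  have hθ4 : θ ≤ 1/4 := h1.trans hε
  have hπ := Real.pi_gt_three
  have hcosθpos : 0 < Real.cos θ :=
    Real.cos_pos_of_mem_Ioo ⟨by linarith, by linarith⟩
  have hcosθ1 : Real.cos θ ≤ 1 := Real.cos_le_one θ
  have h2t1 : (2*(t:ℝ)+1)*θ ≤ 1 := by
    have hmul : (2*(t:ℝ)+1)*θ ≤ (2*(t:ℝ)+1) * (1/(2*(t:ℝ)+4)) :=
      mul_le_mul_of_nonneg_left h1 (by positivity)
    have h2 : (2*(t:ℝ)+1) * (1/(2*(t:ℝ)+4)) ≤ 1 := by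
      rw [mul_one_div, div_le_one ht]; linarith
    linarith
  have hcos1 : Real.cos 1 ≤ Real.cos ((2*(t:ℝ)+1)*θ) :=
    Real.cos_le_cos_of_nonneg_of_le_pi (by positivity) (by linarith) h2t1
  have hc1 : (1:ℝ)/2 < Real.cos 1 := by
    have h13 : (1:ℝ) < Real.pi/3 := by linarith
    have := Real.cos_lt_cos_of_nonneg_of_le_pi (x := 1) (y := Real.pi/3)
      (by norm_num) (by linarith) h13
    rwa [Real.cos_pi_div_three] at this
  have hA : Real.cos 1 ≤ Real.cos ((2*(t:ℝ)+1)*θ) / Real.cos θ := by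
    rw [le_div_iff₀ hcosθpos]
    nlinarith
  have hB : |Real.cos ((n:ℝ)*θ) - Real.cos (((n:ℝ)-1)*θ)| ≤ θ := by
    rw [Real.cos_sub_cos]
    have hs : |Real.sin (((n:ℝ)*θ - ((n:ℝ)-1)*θ)/2)| ≤ |((n:ℝ)*θ - ((n:ℝ)-1)*θ)/2| :=
      Real.abs_sin_le_abs
    have heq : ((n:ℝ)*θ - ((n:ℝ)-1)*θ)/2 = θ/2 := by ring
    rw [heq] at hs
    rw [abs_of_nonneg (show (0:ℝ) ≤ θ/2 by linarith)] at hs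
    calc |-2 * Real.sin (((n:ℝ)*θ + ((n:ℝ)-1)*θ)/2) * Real.sin (((n:ℝ)*θ - ((n:ℝ)-1)*θ)/2)|
        = 2 * |Real.sin (((n:ℝ)*θ + ((n:ℝ)-1)*θ)/2)| * |Real.sin (((n:ℝ)*θ - ((n:ℝ)-1)*θ)/2)| := by
          rw [abs_mul, abs_mul]; norm_num
      _ ≤ 2 * 1 * (θ/2) := by
          apply mul_le_mul
          · have := Real.abs_sin_le_one (((n:ℝ)*θ + ((n:ℝ)-1)*θ)/2)
            nlinarith [abs_nonneg (Real.sin (((n:ℝ)*θ + ((n:ℝ)-1)*θ)/2))]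
          · rw [heq]; exact hs
          · exact abs_nonneg _
          · norm_num
      _ = θ := by ring
  have habs := abs_le.mp hB
  unfold Q
  linarith [habs.1, habs.2]

theorem stmt_8 (t n : ℕ) (hn : 6*t + 2 ≤ n) :
    (∀ θ ∈ Set.Icc (0 : ℝ) (1 / (2*(t : ℝ) + 4)), Q n t θ ≠ 0) ∧
    (∀ θ ∈ Set.Ico (2*Real.pi - 1 / (2*(t : ℝ) + 4)) (2*Real.pi), Q n t θ ≠ 0) := by
  constructor
  · intro θ hθ
    exact (Q_pos t n hθ.1 hθ.2).ne'
  · intro θ hθ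
    set φ := 2*Real.pi - θ with hφdef
    have hφ0 : 0 < φ := by simp only [hφdef]; linarith [hθ.2]
    have hφ1 : φ ≤ 1 / (2*(t:ℝ) + 4) := by simp only [hφdef]; linarith [hθ.1]
    have key : ∀ k : ℕ, Real.cos ((k:ℝ) * θ) = Real.cos ((k:ℝ) * φ) := by
      intro k
      have : (k:ℝ) * θ = -((k:ℝ)*φ) + (k:ℝ) * (2*Real.pi) := by
        simp only [hφdef]; ring
      rw [this, Real.cos_add_nat_mul_two_pi, Real.cos_neg]
    have hn1 : 1 ≤ n := by omega
    have hQeq : Q n t θ = Q n t φ := by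
      unfold Q
      have e1 : Real.cos ((n:ℝ) * θ) = Real.cos ((n:ℝ) * φ) := key n
      have e2 : Real.cos (((n:ℝ)-1) * θ) = Real.cos (((n:ℝ)-1) * φ) := by
        have hc : ((n:ℝ) - 1) = ((n-1 : ℕ) : ℝ) := by
          push_cast [Nat.cast_sub hn1]; ring
        rw [hc]; exact key (n-1)
      have e3 : Real.cos ((2*(t:ℝ)+1) * θ) = Real.cos ((2*(t:ℝ)+1) * φ) := by
        have hc : (2*(t:ℝ) + 1) = ((2*t+1 : ℕ) : ℝ) := by push_cast; ring
        rw [hc]; exact key (2*t+1)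
      have e4 : Real.cos θ = Real.cos φ := by
        rw [hφdef, Real.cos_two_pi_sub]
      rw [e1, e2, e3, e4]
    rw [hQeq]
    exact (Q_pos t n hφ0.le hφ1).ne'
end

section
/- Let t be a nonnegative integer and n an integer with n ≥ max(8(t+1)^3, 40(t+2)). Let i be an integer with (2n−1)/(4π(t+2)) − 1 ≤ i ≤ (2n−1)(1 − 1/(4π(t+2))) + 1. Then for every θ in the interval [(4i−1)π/(4n−2), (4i+1)π/(4n−2)], the quantity (−1)^i · (n·sin(nθ) − (n−1)·sin((n−1)θ) + 2·Σ_{j=1}^{t} (−1)^{j+t} · j · sin(2jθ)) is strictly positive. -/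
/-!
Put m = 2n - 1 and φ = mθ/2 - iπ. The window for θ says exactly |φ| ≤ π/4, and

  (-1)^i (n sin nθ - (n - 1) sin (n - 1)θ) = m cos φ sin (θ/2) + sin φ cos (θ/2).

With q = m / (4π(t + 2)), the range of i keeps θ/2 at distance at least π(q - 5/4)/m from
0 and π, so by Jordan's inequality the first term is at least √2 (q - 5/4). The second term
is at least -1 and the trigonometric sum is at most t(t + 1)/2 in absolute value, while the
size of n makes √2 (q - 5/4) exceed t(t + 1) + 1.
-/

open Real

theorem sum_Icc_one_natCast_eq (t : ℕ) : ∑ j ∈ Finset.Icc 1 t, (j : ℝ) = t * (t + 1) / 2 := by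
  induction t with
  | zero => simp
  | succ k ih =>
    rw [Finset.sum_Icc_succ_top (by omega), ih]
    push_cast
    ring

theorem abs_sum_Icc_natCast_mul_le (t : ℕ) (a : ℕ → ℝ) (ha : ∀ j, |a j| ≤ 1) :
    |∑ j ∈ Finset.Icc 1 t, (j : ℝ) * a j| ≤ t * (t + 1) / 2 := by
  calc |∑ j ∈ Finset.Icc 1 t, (j : ℝ) * a j|
      ≤ ∑ j ∈ Finset.Icc 1 t, |(j : ℝ) * a j| := Finset.abs_sum_le_sum_abs _ _
    _ ≤ ∑ j ∈ Finset.Icc 1 t, (j : ℝ) := by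
      gcongr with j
      rw [abs_mul, Nat.abs_cast]
      exact mul_le_of_le_one_right j.cast_nonneg (ha j)
    _ = t * (t + 1) / 2 := sum_Icc_one_natCast_eq t

theorem sqrt_two_div_two_le_cos {φ : ℝ} (hφ : |φ| ≤ π / 4) : √2 / 2 ≤ cos φ := by
  rw [← cos_pi_div_four, ← cos_abs φ]
  exact cos_le_cos_of_nonneg_of_le_pi (abs_nonneg φ) (by linarith [pi_pos]) hφ

theorem two_div_pi_mul_le_sin {X x : ℝ} (hX : 0 ≤ X) (hx : x ∈ Set.Icc X (π - X)) :
    2 / π * X ≤ sin x := by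
  obtain ⟨hXx, hxX⟩ := hx
  rcases le_total x (π / 2) with h | h
  · exact (mul_le_mul_of_nonneg_left hXx (by positivity)).trans (mul_le_sin (hX.trans hXx) h)
  · rw [← sin_pi_sub]
    exact (mul_le_mul_of_nonneg_left (by linarith) (by positivity)).trans
      (mul_le_sin (by linarith) (by linarith))

theorem neg_one_zpow_mul_sin_diff_eq (n θ : ℝ) (i : ℤ) :
    (-1 : ℝ) ^ i * (n * sin (n * θ) - (n - 1) * sin ((n - 1) * θ)) =
      (2 * n - 1) * cos ((2 * n - 1) * θ / 2 - i * π) * sin (θ / 2) +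
        sin ((2 * n - 1) * θ / 2 - i * π) * cos (θ / 2) := by
  have hadd : n * θ = (2 * n - 1) * θ / 2 + θ / 2 := by ring
  have hsub : (n - 1) * θ = (2 * n - 1) * θ / 2 - θ / 2 := by ring
  rw [cos_sub_int_mul_pi, sin_sub_int_mul_pi, hadd, hsub, sin_add, sin_sub]
  ring

theorem abs_mul_half_sub_int_mul_pi_le {m θ : ℝ} (hm : 0 < m) (i : ℤ)
    (hθ : θ ∈ Set.Icc ((4 * i - 1) * π / (2 * m)) ((4 * i + 1) * π / (2 * m))) :
    |m * θ / 2 - i * π| ≤ π / 4 := by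
  obtain ⟨h₁, h₂⟩ := hθ
  rw [div_le_iff₀ (by positivity)] at h₁
  rw [le_div_iff₀ (by positivity)] at h₂
  rw [abs_le]
  constructor <;> linarith

theorem half_mem_Icc_of_index_bounds {m q : ℝ} (hm : 0 < m) {i : ℤ}
    (hi₁ : q - 1 ≤ i) (hi₂ : i ≤ m - q + 1) {θ : ℝ}
    (hθ : θ ∈ Set.Icc ((4 * i - 1) * π / (2 * m)) ((4 * i + 1) * π / (2 * m))) :
    θ / 2 ∈ Set.Icc (π * (q - 5 / 4) / m) (π - π * (q - 5 / 4) / m) := by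
  obtain ⟨h₁, h₂⟩ := hθ
  rw [div_le_iff₀ (by positivity)] at h₁
  rw [le_div_iff₀ (by positivity)] at h₂
  constructor
  · rw [div_le_iff₀ hm]
    nlinarith [pi_pos]
  · rw [sub_div' hm.ne', le_div_iff₀ hm]
    nlinarith [pi_pos]

theorem sqrt_two_mul_sub_one_le {m r φ ψ : ℝ} (hm : 0 < m) (hr : 0 ≤ r) (hφ : |φ| ≤ π / 4)
    (hψ : ψ ∈ Set.Icc (π * r / m) (π - π * r / m)) :
    √2 * r - 1 ≤ m * cos φ * sin ψ + sin φ * cos ψ := by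
  have hcos := sqrt_two_div_two_le_cos hφ
  have hsin := two_div_pi_mul_le_sin (by positivity) hψ
  have hsin' : 2 / π * (π * r / m) = 2 * r / m := by field_simp
  rw [hsin'] at hsin
  have hcross : -1 ≤ sin φ * cos ψ := by
    have := abs_le.1 (abs_sin_le_one φ)
    have := abs_le.1 (abs_cos_le_one ψ)
    nlinarith
  have hmain : √2 * r ≤ m * cos φ * sin ψ := by
    calc √2 * r = m * (√2 / 2) * (2 * r / m) := by field_simp
      _ ≤ m * cos φ * sin ψ := by
        gcongr
        exact mul_nonneg hm.le ((by positivity : (0 : ℝ) ≤ √2 / 2).trans hcos)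
  linarith

theorem triangular_add_one_lt {t n : ℕ} (hn : max (8 * (t + 1) ^ 3) (40 * (t + 2)) ≤ n) :
    (t : ℝ) * (t + 1) + 1 < √2 * ((2 * n - 1) / (4 * π * (t + 2)) - 5 / 4) := by
  have hn₁ : 8 * ((t : ℝ) + 1) ^ 3 ≤ n := by exact_mod_cast (le_max_left _ _).trans hn
  have hn₂ : 40 * ((t : ℝ) + 2) ≤ n := by exact_mod_cast (le_max_right _ _).trans hn
  have ht : (0 : ℝ) ≤ t := t.cast_nonneg
  have hsqrt : (7 / 5 : ℝ) ≤ √2 := le_sqrt_of_sq_le (by norm_num)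
  have hc : 4 * π * (t + 2) ≤ 63 / 5 * (t + 2) := by nlinarith [pi_lt_d2]
  have hq : 5 * ((t : ℝ) ^ 2 + t + 1) / 7 + 5 / 4 < (2 * n - 1) / (4 * π * (t + 2)) := by
    rw [lt_div_iff₀ (by positivity)]
    nlinarith [pow_nonneg ht 3, sq_nonneg (t : ℝ)]
  nlinarith

theorem stmt_13 (t : ℕ) (n : ℕ) (hn : max (8*(t+1)^3) (40*(t+2)) ≤ n) (i : ℤ)
    (hi₁ : (2*(n : ℝ) - 1) / (4*π*((t : ℝ) + 2)) - 1 ≤ (i : ℝ))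
    (hi₂ : (i : ℝ) ≤ (2*(n : ℝ) - 1) * (1 - 1 / (4*π*((t : ℝ) + 2))) + 1) :
    ∀ θ ∈ Set.Icc ((4*(i : ℝ) - 1)*π / (4*(n : ℝ) - 2)) ((4*(i : ℝ) + 1)*π / (4*(n : ℝ) - 2)),
      0 < (-1 : ℝ)^i *
        ((n : ℝ) * sin (n * θ) - ((n : ℝ) - 1) * sin (((n : ℝ) - 1) * θ) +
          2 * ∑ j ∈ Finset.Icc 1 t, (-1 : ℝ)^(j + t) * (j : ℝ) * sin (2*(j : ℝ) * θ)) := by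
  intro θ hθ
  have hnum := triangular_add_one_lt hn
  have hm : (0 : ℝ) < 2 * n - 1 := by
    have : (1 : ℝ) ≤ n := by exact_mod_cast (by omega : 1 ≤ n)
    linarith
  have hr : 0 ≤ (2 * n - 1) / (4 * π * (t + 2)) - 5 / 4 := by
    nlinarith [sqrt_nonneg 2, Nat.cast_nonneg (α := ℝ) t]
  rw [show 4 * (n : ℝ) - 2 = 2 * (2 * n - 1) by ring] at hθ
  rw [mul_one_sub, mul_one_div] at hi₂
  have hφ := abs_mul_half_sub_int_mul_pi_le hm i hθ
  have hψ := half_mem_Icc_of_index_bounds hm hi₁ hi₂ hθ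
  have hmain := sqrt_two_mul_sub_one_le hm hr hφ hψ
  set S := ∑ j ∈ Finset.Icc 1 t, (-1 : ℝ) ^ (j + t) * (j : ℝ) * sin (2 * (j : ℝ) * θ)
  have hS : |S| ≤ t * (t + 1) / 2 := by
    convert abs_sum_Icc_natCast_mul_le t (fun j => (-1) ^ (j + t) * sin (2 * j * θ))
      (fun j => by simp [abs_mul, abs_sin_le_one]) using 3 with j
    ring
  have hsign := neg_abs_le ((-1 : ℝ) ^ i * (2 * S))
  rw [abs_mul, abs_mul, abs_neg_one_zpow, abs_two, one_mul] at hsign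
  rw [mul_add, neg_one_zpow_mul_sin_diff_eq]
  linarith
end

section
/- Let t be a nonnegative integer and n an integer with n ≥ max(8(t+1)^3, 40(t+2)). Let i be an integer with (2n−1)/(4π(t+2)) − 1 ≤ i ≤ (2n−1)(1 − 1/(4π(t+2))). Then for every θ in the interval [(4i+1)π/(4n−2), (4i+3)π/(4n−2)], the quantity n²·cos(nθ) − (n−1)²·cos((n−1)θ) + Σ_{j=1}^{t} 4·(−1)^{j+t} · j² · cos(2jθ) is nonzero. -/
open Real

/-!
With `m = n - 1/2`, the first two terms equal
`2m cos(mθ) cos(θ/2) - (2m² + 1/2) sin(mθ) sin(θ/2)`. On the given interval `mθ` lies within `π/4`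
of an odd multiple of `π/2`, so `|sin(mθ)| ≥ 1/2`, and the constraint on `i` keeps `θ/2` at distance
about `1/(4(t+2))` from `0` and `π`, so Jordan's inequality gives `sin(θ/2) ≥ 1/(10(t+2))`. The sine
term therefore has size at least `m²/(10(t+2))`, which exceeds the bound `2m + 4t³` on
everything else.
-/

theorem two_div_pi_mul_le_sin_s14 {a y : ℝ} (ha : 0 ≤ a) (hay : a ≤ y) (hya : y ≤ π - a) :
    2 / π * a ≤ sin y := by
  rcases le_total y (π / 2) with hy | hy
  · exact (mul_le_mul_of_nonneg_left hay (by positivity)).trans (mul_le_sin (ha.trans hay) hy)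
  · rw [← sin_pi_sub]
    exact (mul_le_mul_of_nonneg_left (by linarith) (by positivity)).trans
      (mul_le_sin (by linarith) (by linarith))

theorem half_le_abs_sin_of_mem_Icc {x : ℝ} {i : ℤ}
    (hx : x ∈ Set.Icc (i * π + π / 4) (i * π + 3 * π / 4)) :
    1 / 2 ≤ |sin x| := by
  have hsin : 2 / π * (π / 4) ≤ sin (x - i * π) :=
    two_div_pi_mul_le_sin_s14 (by positivity) (by linarith [hx.1]) (by linarith [hx.2])
  calc 1 / 2 = 2 / π * (π / 4) := by field_simp; ring
    _ ≤ |sin (x - i * π)| := hsin.trans (le_abs_self _)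
    _ = |sin x| := by rw [sin_sub_int_mul_pi, abs_mul, abs_neg_one_zpow, one_mul]

theorem abs_sum_alternating_sq_mul_cos_le (t : ℕ) (θ : ℝ) :
    |∑ j ∈ Finset.Icc 1 t, 4 * (-1 : ℝ) ^ (j + t) * (j : ℝ) ^ 2 * cos (2 * (j : ℝ) * θ)| ≤
      4 * (t : ℝ) ^ 3 := by
  have hterm : ∀ j ∈ Finset.Icc 1 t,
      |4 * (-1 : ℝ) ^ (j + t) * (j : ℝ) ^ 2 * cos (2 * (j : ℝ) * θ)| ≤ 4 * (t : ℝ) ^ 2 := by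
    intro j hj
    have hjt : (j : ℝ) ≤ t := by exact_mod_cast (Finset.mem_Icc.mp hj).2
    rw [abs_mul, abs_mul, abs_mul, abs_neg_one_pow, abs_of_pos four_pos, abs_sq]
    have := abs_cos_le_one (2 * (j : ℝ) * θ)
    have : (j : ℝ) ^ 2 ≤ t ^ 2 := pow_le_pow_left₀ j.cast_nonneg hjt 2
    nlinarith [sq_nonneg (j : ℝ)]
  calc _ ≤ ∑ j ∈ Finset.Icc 1 t,
          |4 * (-1 : ℝ) ^ (j + t) * (j : ℝ) ^ 2 * cos (2 * (j : ℝ) * θ)| :=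
        Finset.abs_sum_le_sum_abs _ _
    _ ≤ (Finset.Icc 1 t).card • (4 * (t : ℝ) ^ 2) := Finset.sum_le_card_nsmul _ _ _ hterm
    _ = 4 * (t : ℝ) ^ 3 := by
      rw [Nat.card_Icc, nsmul_eq_mul, Nat.add_sub_cancel]; ring

theorem sq_mul_cos_sub_sq_mul_cos (x θ : ℝ) :
    x ^ 2 * cos (x * θ) - (x - 1) ^ 2 * cos ((x - 1) * θ) =
      2 * (x - 1 / 2) * cos ((x - 1 / 2) * θ) * cos (θ / 2) -
        (2 * (x - 1 / 2) ^ 2 + 1 / 2) * sin ((x - 1 / 2) * θ) * sin (θ / 2) := by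
  rw [show x * θ = (x - 1 / 2) * θ + θ / 2 by ring,
    show (x - 1) * θ = (x - 1 / 2) * θ - θ / 2 by ring, cos_add, cos_sub]
  ring

section Localization

variable {N c θ : ℝ} {i : ℤ}

theorem half_mul_mem_Icc_of_mem_Icc (hN : 0 < N)
    (hθ : θ ∈ Set.Icc ((4 * i + 1) * π / (2 * N)) ((4 * i + 3) * π / (2 * N))) :
    N / 2 * θ ∈ Set.Icc (i * π + π / 4) (i * π + 3 * π / 4) := by
  obtain ⟨h₁, h₂⟩ := hθ
  rw [div_le_iff₀ (by positivity)] at h₁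
  rw [le_div_iff₀ (by positivity)] at h₂
  constructor <;> linarith

theorem half_mem_Icc_of_mem_Icc (hN : 0 < N) (hc : 0 < c) (hi₁ : N / c - 1 ≤ i)
    (hi₂ : i ≤ N * (1 - 1 / c))
    (hθ : θ ∈ Set.Icc ((4 * i + 1) * π / (2 * N)) ((4 * i + 3) * π / (2 * N))) :
    θ / 2 ∈ Set.Icc (π / c - 3 * π / (4 * N)) (π - (π / c - 3 * π / (4 * N))) := by
  constructor
  · calc π / c - 3 * π / (4 * N) = (4 * (N / c - 1) + 1) * π / (2 * N) / 2 := by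
          field_simp; ring
      _ ≤ (4 * i + 1) * π / (2 * N) / 2 := by gcongr
      _ ≤ θ / 2 := by linarith [hθ.1]
  · calc θ / 2 ≤ (4 * i + 3) * π / (2 * N) / 2 := by linarith [hθ.2]
      _ ≤ (4 * (N * (1 - 1 / c)) + 3) * π / (2 * N) / 2 := by gcongr
      _ = π - (π / c - 3 * π / (4 * N)) := by field_simp; ring

end Localization

theorem one_div_le_sin_half {T N θ : ℝ} (hT : 0 ≤ T) (hN : 79 * (T + 2) ≤ N)
    (hθ : θ / 2 ∈ Set.Icc (π / (4 * π * (T + 2)) - 3 * π / (4 * N))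
      (π - (π / (4 * π * (T + 2)) - 3 * π / (4 * N)))) :
    1 / (10 * (T + 2)) ≤ sin (θ / 2) := by
  set a := π / (4 * π * (T + 2)) - 3 * π / (4 * N)
  have hN₀ : 0 < N := by linarith
  have ha : 2 / π * a = 1 / (2 * π * (T + 2)) - 3 / (2 * N) := by
    simp only [a]; field_simp; ring
  have hδ : 1 / (10 * (T + 2)) ≤ 2 / π * a := by
    rw [ha, div_sub_div _ _ (by positivity) (by positivity), le_div_iff₀ (by positivity)]
    rw [show 1 / (10 * (T + 2)) * (2 * π * (T + 2) * (2 * N)) = 2 * π * N / 5 by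
      field_simp; ring]
    nlinarith [mul_le_mul_of_nonneg_right pi_le_four hN₀.le,
      mul_le_mul_of_nonneg_right pi_le_four (by linarith : 0 ≤ T + 2)]
  have ha₀ : 0 ≤ a := nonneg_of_mul_nonneg_right (le_trans (by positivity) hδ) (by positivity)
  exact hδ.trans (two_div_pi_mul_le_sin_s14 ha₀ hθ.1 hθ.2)

theorem expansion_add_ne_zero_of_dominant {m θ δ C S : ℝ} (hm : 0 ≤ m)
    (hsin : 1 / 2 ≤ |sin (m * θ)|) (hδ : δ ≤ sin (θ / 2)) (hS : |S| ≤ C)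
    (hdom : 2 * m + C < m ^ 2 * δ) :
    2 * m * cos (m * θ) * cos (θ / 2) - (2 * m ^ 2 + 1 / 2) * sin (m * θ) * sin (θ / 2) + S ≠
      0 := by
  intro h
  have hsmall : |2 * m * cos (m * θ) * cos (θ / 2) + S| ≤ 2 * m + C := by
    refine (abs_add_le _ _).trans (add_le_add ?_ hS)
    rw [abs_mul, abs_mul, abs_of_nonneg (by positivity : 0 ≤ 2 * m), mul_assoc]
    exact mul_le_of_le_one_right (by positivity)
      (mul_le_one₀ (abs_cos_le_one _) (abs_nonneg _) (abs_cos_le_one _))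
  have hbig : m ^ 2 * δ ≤ |(2 * m ^ 2 + 1 / 2) * sin (m * θ) * sin (θ / 2)| := by
    rw [abs_mul, abs_mul, abs_of_pos (by positivity : 0 < 2 * m ^ 2 + 1 / 2)]
    have hσ := hδ.trans (le_abs_self (sin (θ / 2)))
    nlinarith [mul_le_mul_of_nonneg_left hσ (sq_nonneg m), abs_nonneg (sin (θ / 2)),
      mul_le_mul_of_nonneg_right hsin (abs_nonneg (sin (θ / 2)))]
  rw [show (2 * m ^ 2 + 1 / 2) * sin (m * θ) * sin (θ / 2) =
    2 * m * cos (m * θ) * cos (θ / 2) + S by linarith] at hbig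
  linarith

theorem two_mul_add_cube_lt {m T : ℝ} (hT : 0 ≤ T) (hm : 39 * (T + 2) ≤ m) (hm' : 8 * T ^ 3 ≤ m) :
    2 * m + 4 * T ^ 3 < m ^ 2 * (1 / (10 * (T + 2))) := by
  rw [← div_eq_mul_one_div, lt_div_iff₀ (by positivity)]
  nlinarith [mul_le_mul_of_nonneg_left hm (by linarith : 0 ≤ m),
    mul_le_mul_of_nonneg_left hm' (by linarith : (0:ℝ) ≤ T + 2)]

theorem stmt_14 (t : ℕ) (n : ℕ) (hn : max (8*(t+1)^3) (40*(t+2)) ≤ n) (i : ℤ)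
    (hi₁ : (2*(n : ℝ) - 1) / (4*π*((t : ℝ) + 2)) - 1 ≤ (i : ℝ))
    (hi₂ : (i : ℝ) ≤ (2*(n : ℝ) - 1) * (1 - 1 / (4*π*((t : ℝ) + 2)))) :
    ∀ θ ∈ Set.Icc ((4*(i : ℝ) + 1)*π / (4*(n : ℝ) - 2)) ((4*(i : ℝ) + 3)*π / (4*(n : ℝ) - 2)),
      (n : ℝ)^2 * cos (n * θ) - ((n : ℝ) - 1)^2 * cos (((n : ℝ) - 1) * θ) +
        ∑ j ∈ Finset.Icc 1 t, 4 * (-1 : ℝ)^(j + t) * (j : ℝ)^2 * cos (2*(j : ℝ) * θ) ≠ 0 := by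
  intro θ hθ
  have hn₁ : 8 * ((t : ℝ) + 1) ^ 3 ≤ n := by exact_mod_cast (le_max_left _ _).trans hn
  have hn₂ : 40 * ((t : ℝ) + 2) ≤ n := by exact_mod_cast (le_max_right _ _).trans hn
  have ht : 0 ≤ (t : ℝ) := t.cast_nonneg
  have hN : 0 < 2 * (n : ℝ) - 1 := by linarith
  rw [show 4 * (n : ℝ) - 2 = 2 * (2 * n - 1) by ring] at hθ
  have hmθ := half_mul_mem_Icc_of_mem_Icc hN hθ
  rw [show (2 * (n : ℝ) - 1) / 2 = n - 1 / 2 by ring] at hmθ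
  have hsin_half := one_div_le_sin_half ht (by linarith)
    (half_mem_Icc_of_mem_Icc hN (by positivity) hi₁ hi₂ hθ)
  rw [sq_mul_cos_sub_sq_mul_cos]
  refine expansion_add_ne_zero_of_dominant (by linarith) (half_le_abs_sin_of_mem_Icc hmθ)
    hsin_half (abs_sum_alternating_sq_mul_cos_le t θ) (two_mul_add_cube_lt ht (by linarith) ?_)
  nlinarith [sq_nonneg (t : ℝ)]
end

section
/- Let t be a nonnegative integer and n an integer with n ≥ max(16(t+1)^3, 40(t+2)). Then the set {θ ∈ [0, 2π) : cos θ ≠ 0 and Q_{n,t}(θ) = 0} is finite and has at most 2n−1 elements. -/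
open Polynomial Real

namespace Polynomial

theorem eval_mul_eval_derivative_derivative_le_X_sub_C_mul {q : ℝ[X]} {x : ℝ} (r : ℝ)
    (hq : q.eval x * (derivative (derivative q)).eval x ≤ (derivative q).eval x ^ 2) :
    ((X - C r) * q).eval x * (derivative (derivative ((X - C r) * q))).eval x ≤
      (derivative ((X - C r) * q)).eval x ^ 2 := by
  simp only [derivative_mul, derivative_sub, derivative_X, derivative_C, sub_zero, one_mul,
    derivative_add, eval_add, eval_mul, eval_sub, eval_X, eval_C]
  -- `f'² - f f'' = q² + (x - r)² (q'² - q q'')` for `f = (X - C r) q`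
  nlinarith [mul_le_mul_of_nonneg_left hq (sq_nonneg (x - r)), sq_nonneg (q.eval x)]

theorem Splits.eval_mul_eval_derivative_derivative_le {p : ℝ[X]} (hp : p.Splits) (x : ℝ) :
    p.eval x * (derivative (derivative p)).eval x ≤ (derivative p).eval x ^ 2 := by
  rw [hp.eq_prod_roots]
  induction p.roots using Multiset.induction with
  | empty => simp
  | cons r s ih =>
    rw [Multiset.map_cons, Multiset.prod_cons, mul_left_comm]
    exact eval_mul_eval_derivative_derivative_le_X_sub_C_mul r ih

theorem card_roots_toFinset_lt_natDegree_of_lt {p : ℝ[X]} {x : ℝ}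
    (h : (derivative p).eval x ^ 2 < p.eval x * (derivative (derivative p)).eval x) :
    p.roots.toFinset.card < p.natDegree := by
  by_contra! hle
  have hsplit : p.Splits := splits_iff_card_roots.mpr <|
    le_antisymm p.card_roots' (hle.trans p.roots.toFinset_card_le)
  exact (hsplit.eval_mul_eval_derivative_derivative_le x).not_gt h

end Polynomial

namespace Polynomial.Chebyshev

variable {R : Type*} [CommRing R]

theorem derivative_derivative_T_eval_one (m : ℤ) :
    3 * (derivative (derivative (T R m))).eval 1 = m ^ 2 * (m ^ 2 - 1) := by
  have h := iterate_derivative_T_eval_one_recurrence (R := R) m 1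
  simp only [Function.iterate_succ_apply', Function.iterate_zero_apply,
    derivative_T_eval_one] at h
  push_cast at h
  linear_combination h

theorem X_mul_divX_T_of_odd {m : ℤ} (hm : Odd m) : X * (T R m).divX = T R m := by
  simpa [coeff_zero_eq_eval_zero, T_eval_zero_of_odd R hm] using X_mul_divX_add (T R m)

theorem divX_T_eval_one_of_odd {m : ℤ} (hm : Odd m) : (T R m).divX.eval 1 = 1 := by
  simpa using congrArg (eval 1) (X_mul_divX_T_of_odd (R := R) hm)

theorem derivative_divX_T_eval_one_of_odd {m : ℤ} (hm : Odd m) :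
    (derivative (T R m).divX).eval 1 = m ^ 2 - 1 := by
  have h := congrArg (fun p => (derivative p).eval 1) (X_mul_divX_T_of_odd (R := R) hm)
  simp only [derivative_mul, derivative_X, one_mul, eval_add, eval_mul, eval_X,
    derivative_T_eval_one, divX_T_eval_one_of_odd hm] at h
  linear_combination h

theorem derivative_derivative_divX_T_eval_one_of_odd {m : ℤ} (hm : Odd m) :
    3 * (derivative (derivative (T R m).divX)).eval 1 = (m ^ 2 - 1) * (m ^ 2 - 6) := by
  have h := congrArg (fun p => 3 * (derivative (derivative p)).eval 1)
    (X_mul_divX_T_of_odd (R := R) hm)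
  simp only [derivative_mul, derivative_X, one_mul, derivative_add, eval_add, eval_mul, eval_X,
    derivative_divX_T_eval_one_of_odd hm, derivative_derivative_T_eval_one] at h
  linear_combination h

end Polynomial.Chebyshev

open Polynomial.Chebyshev

noncomputable def qPoly (n t : ℕ) : ℝ[X] :=
  2 * T ℝ n - 2 * T ℝ (n - 1 : ℤ) + (T ℝ (2 * t + 1 : ℤ)).divX

theorem Q_eq_eval_qPoly (n t : ℕ) {θ : ℝ} (hc : cos θ ≠ 0) :
    Q n t θ = (qPoly n t).eval (cos θ) := by
  have hD : (T ℝ (2 * t + 1 : ℤ)).divX.eval (cos θ) = cos ((2 * t + 1) * θ) / cos θ := by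
    rw [eq_div_iff hc, mul_comm]
    simpa [T_real_cos] using
      congrArg (eval (cos θ)) (X_mul_divX_T_of_odd (R := ℝ) (odd_two_mul_add_one (t : ℤ)))
  simp only [Q, qPoly, eval_add, eval_sub, eval_mul, eval_ofNat, T_real_cos, hD]
  push_cast
  ring

theorem natDegree_qPoly_le {n t : ℕ} (h : 2 * t + 1 ≤ n) : (qPoly n t).natDegree ≤ n := by
  have hT : ∀ m : ℤ, m.natAbs ≤ n → (2 * T ℝ m).natDegree ≤ n := fun m hm =>
    natDegree_mul_le.trans (by simpa using hm)
  refine natDegree_add_le_of_degree_le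
    ((natDegree_sub_le_of_le (hT _ ?_) (hT _ ?_)).trans (max_self n).le) ?_
  · simp
  · omega
  · exact natDegree_divX_le.trans (by simp; omega)

theorem qPoly_eval_one (n t : ℕ) : (qPoly n t).eval 1 = 1 := by
  simp [qPoly, divX_T_eval_one_of_odd (odd_two_mul_add_one (t : ℤ))]

theorem derivative_qPoly_eval_one (n t : ℕ) :
    (derivative (qPoly n t)).eval 1 = 4 * n + (2 * t + 1) ^ 2 - 3 := by
  simp only [qPoly, derivative_add, derivative_sub, derivative_mul, derivative_ofNat, zero_mul,
    zero_add, eval_add, eval_sub, eval_mul, eval_ofNat, derivative_T_eval_one,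
    derivative_divX_T_eval_one_of_odd (odd_two_mul_add_one (t : ℤ))]
  push_cast
  ring

theorem derivative_derivative_qPoly_eval_one (n t : ℕ) :
    3 * (derivative (derivative (qPoly n t))).eval 1 =
      8 * n ^ 3 - 12 * n ^ 2 + 4 * n + ((2 * t + 1) ^ 2 - 1) * ((2 * t + 1) ^ 2 - 6) := by
  have hn := derivative_derivative_T_eval_one (R := ℝ) n
  have hn1 := derivative_derivative_T_eval_one (R := ℝ) (n - 1)
  have ht := derivative_derivative_divX_T_eval_one_of_odd (R := ℝ) (odd_two_mul_add_one (t : ℤ))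
  simp only [qPoly, derivative_add, derivative_sub, derivative_mul, derivative_ofNat, zero_mul,
    zero_add, eval_add, eval_sub, eval_mul, eval_ofNat]
  push_cast at hn hn1 ht ⊢
  linear_combination 2 * hn - 2 * hn1 + ht

theorem sq_add_sub_lt_of_four_mul_le {N A : ℝ} (hA : 1 ≤ A) (hAN : 4 * A ≤ N) (hN : 16 ≤ N) :
    3 * (4 * N + A - 3) ^ 2 < 8 * N ^ 3 - 12 * N ^ 2 + 4 * N + (A - 1) * (A - 6) := by
  nlinarith [mul_le_mul_of_nonneg_left hAN (by linarith : (0 : ℝ) ≤ N),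
    mul_le_mul_of_nonneg_left hN (sq_nonneg N)]

theorem sq_derivative_qPoly_eval_one_lt {n t : ℕ} (h : 16 * (t + 1) ^ 3 ≤ n) :
    (derivative (qPoly n t)).eval 1 ^ 2 <
      (qPoly n t).eval 1 * (derivative (derivative (qPoly n t))).eval 1 := by
  have hR : 16 * ((t : ℝ) + 1) ^ 3 ≤ n := by exact_mod_cast h
  have ht : (0 : ℝ) ≤ t := t.cast_nonneg
  have key := sq_add_sub_lt_of_four_mul_le (A := (2 * t + 1) ^ 2) (N := n)
    (one_le_pow₀ (by linarith)) (by nlinarith [pow_nonneg ht 3])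
    (by nlinarith [one_le_pow₀ (n := 3) (by linarith : (1 : ℝ) ≤ t + 1)])
  rw [qPoly_eval_one, one_mul, derivative_qPoly_eval_one]
  linarith [derivative_derivative_qPoly_eval_one n t]

theorem eq_arccos_cos_or_eq_two_pi_sub_arccos_cos {θ : ℝ} (hθ : θ ∈ Set.Ico 0 (2 * π)) :
    θ = arccos (cos θ) ∨ θ = 2 * π - arccos (cos θ) := by
  obtain ⟨h0, h2π⟩ := hθ
  rcases le_or_gt θ π with hπ | hπ
  · exact Or.inl (arccos_cos h0 hπ).symm
  · right
    rw [← cos_two_pi_sub θ, arccos_cos (by linarith) (by linarith)]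
    ring

theorem finite_and_ncard_le_of_cos_mem (S : Finset ℝ) :
    {θ : ℝ | θ ∈ Set.Ico 0 (2 * π) ∧ cos θ ∈ S}.Finite ∧
      {θ : ℝ | θ ∈ Set.Ico 0 (2 * π) ∧ cos θ ∈ S}.ncard ≤ 2 * S.card := by
  set A := S.image arccos ∪ S.image (fun c => 2 * π - arccos c)
  have hsub : {θ : ℝ | θ ∈ Set.Ico 0 (2 * π) ∧ cos θ ∈ S} ⊆ A := by
    rintro θ ⟨hθ, hS⟩
    rw [Finset.mem_coe, Finset.mem_union]
    rcases eq_arccos_cos_or_eq_two_pi_sub_arccos_cos hθ with h | h <;> rw [h]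
    · exact Or.inl (Finset.mem_image_of_mem _ hS)
    · exact Or.inr (Finset.mem_image_of_mem (fun c => 2 * π - arccos c) hS)
  refine ⟨A.finite_toSet.subset hsub, (Set.ncard_le_ncard hsub A.finite_toSet).trans ?_⟩
  rw [Set.ncard_coe_finset, two_mul]
  exact (Finset.card_union_le _ _).trans (add_le_add Finset.card_image_le Finset.card_image_le)

theorem stmt_15 (t : ℕ) (n : ℕ) (hn : max (16*(t+1)^3) (40*(t+2)) ≤ n) :
    {θ : ℝ | θ ∈ Set.Ico 0 (2*Real.pi) ∧ Real.cos θ ≠ 0 ∧ Q n t θ = 0}.Finite ∧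
    {θ : ℝ | θ ∈ Set.Ico 0 (2*Real.pi) ∧ Real.cos θ ≠ 0 ∧ Q n t θ = 0}.ncard ≤ 2*n - 1 := by
  have hn' : 16 * (t + 1) ^ 3 ≤ n := le_of_max_le_left hn
  set S := (qPoly n t).roots.toFinset
  have hS : S.card < n :=
    (card_roots_toFinset_lt_natDegree_of_lt (sq_derivative_qPoly_eval_one_lt hn')).trans_le
      (natDegree_qPoly_le (by have := le_of_max_le_right hn; omega))
  have hqPoly : qPoly n t ≠ 0 := fun h => by simpa [h] using qPoly_eval_one n t
  have hsub : {θ : ℝ | θ ∈ Set.Ico 0 (2*Real.pi) ∧ Real.cos θ ≠ 0 ∧ Q n t θ = 0} ⊆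
      {θ : ℝ | θ ∈ Set.Ico 0 (2 * π) ∧ cos θ ∈ S} := by
    rintro θ ⟨hθ, hc, hQ⟩
    exact ⟨hθ, by simpa [S, hqPoly, ← Q_eq_eval_qPoly n t hc] using hQ⟩
  obtain ⟨hfin, hcard⟩ := finite_and_ncard_le_of_cos_mem S
  exact ⟨hfin.subset hsub, (Set.ncard_le_ncard hsub hfin).trans (by omega)⟩
end

section
/- Let t be a nonnegative integer and n an integer with n ≥ max(8(t+1)^3, 40(t+2)). Regarding P_{n,t} as a polynomial over ℂ, the multiset of its complex roots (counted with multiplicity) that lie on the unit circle {z : |z| = 1} has cardinality at most 2n−1. -/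
/-
If all `2n` roots of `P = P_{n,t}` lay on the unit circle, then, since `P(1) = 1`, every root `z`
would give `b = 1/(1 - z)` with `Re b = 1/2`, so that `(b - 1/2)^4 = (Im b)^4 ≥ 0`. The power
sums of the `b`'s are read off, via Newton's identities, from the low-order coefficients of
`P(1 - X)`, and they make `∑ (b - 1/2)^4` a cubic in `n` with leading term `-(4/3) n^3`, which is
negative for `n ≥ max(8(t+1)^3, 40(t+2))`. To avoid the alternating sum in `P`, the argument is
run on the sparse polynomial `(1 + X^2) P`, whose two extra roots `±i` also lie on the unit circle.
-/

open Polynomial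
open scoped Classical

/-- The polynomial `P_{n,t}(X) = X^{2n} - X^{2n-1} + ∑_{i=0}^{2t} (-1)^i X^{n+2t-2i} - X + 1`. -/
noncomputable def Ppoly (n t : ℕ) : Polynomial ℤ :=
  X^(2*n) - X^(2*n-1) + ∑ i ∈ Finset.range (2*t+1), (-1)^i • X^(n+2*t-2*i) - X + 1

section PowerSums
variable {R : Type*} [CommRing R]

noncomputable def prodOneSubCMulX (s : Multiset R) : R[X] := (s.map fun a => 1 - C a * X).prod

def powerSum (k : ℕ) (s : Multiset R) : R := (s.map (· ^ k)).sum

@[simp] lemma prodOneSubCMulX_zero : prodOneSubCMulX (0 : Multiset R) = 1 := by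
  simp [prodOneSubCMulX]

@[simp] lemma prodOneSubCMulX_cons (a : R) (s : Multiset R) :
    prodOneSubCMulX (a ::ₘ s) = (1 - C a * X) * prodOneSubCMulX s := by
  simp [prodOneSubCMulX]

@[simp] lemma powerSum_zero (k : ℕ) : powerSum k (0 : Multiset R) = 0 := by
  simp [powerSum]

@[simp] lemma powerSum_cons (k : ℕ) (a : R) (s : Multiset R) :
    powerSum k (a ::ₘ s) = a ^ k + powerSum k s := by
  simp [powerSum]

lemma coeff_prodOneSubCMulX_cons (a : R) (s : Multiset R) (k : ℕ) :
    (prodOneSubCMulX (a ::ₘ s)).coeff (k + 1) =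
      (prodOneSubCMulX s).coeff (k + 1) - a * (prodOneSubCMulX s).coeff k := by
  rw [prodOneSubCMulX_cons, sub_mul, one_mul, mul_assoc, coeff_sub, coeff_C_mul, coeff_X_mul]

@[simp] lemma coeff_zero_prodOneSubCMulX (s : Multiset R) : (prodOneSubCMulX s).coeff 0 = 1 := by
  induction s using Multiset.induction_on with
  | empty => simp
  | cons a s ih => simp [mul_coeff_zero, ih]

variable (s : Multiset R)

lemma powerSum_one_eq : powerSum 1 s = -(prodOneSubCMulX s).coeff 1 := by
  induction s using Multiset.induction_on with
  | empty => simp [coeff_one]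
  | cons a s ih =>
    simp only [powerSum_cons, coeff_prodOneSubCMulX_cons a s 0, coeff_zero_prodOneSubCMulX]
    linear_combination ih

lemma powerSum_two_eq :
    powerSum 2 s = (prodOneSubCMulX s).coeff 1 ^ 2 - 2 * (prodOneSubCMulX s).coeff 2 := by
  induction s using Multiset.induction_on with
  | empty => simp [coeff_one]
  | cons a s ih =>
    simp only [powerSum_cons, coeff_prodOneSubCMulX_cons a s 0, coeff_prodOneSubCMulX_cons a s 1,
      coeff_zero_prodOneSubCMulX]
    linear_combination ih

lemma powerSum_three_eq :
    powerSum 3 s = -(prodOneSubCMulX s).coeff 1 ^ 3 +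
      3 * (prodOneSubCMulX s).coeff 1 * (prodOneSubCMulX s).coeff 2 -
      3 * (prodOneSubCMulX s).coeff 3 := by
  induction s using Multiset.induction_on with
  | empty => simp [coeff_one]
  | cons a s ih =>
    simp only [powerSum_cons, coeff_prodOneSubCMulX_cons a s 0, coeff_prodOneSubCMulX_cons a s 1,
      coeff_prodOneSubCMulX_cons a s 2, coeff_zero_prodOneSubCMulX]
    linear_combination ih

lemma powerSum_four_eq :
    powerSum 4 s = (prodOneSubCMulX s).coeff 1 ^ 4 -
      4 * (prodOneSubCMulX s).coeff 1 ^ 2 * (prodOneSubCMulX s).coeff 2 +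
      2 * (prodOneSubCMulX s).coeff 2 ^ 2 +
      4 * (prodOneSubCMulX s).coeff 1 * (prodOneSubCMulX s).coeff 3 -
      4 * (prodOneSubCMulX s).coeff 4 := by
  induction s using Multiset.induction_on with
  | empty => simp [coeff_one]
  | cons a s ih =>
    simp only [powerSum_cons, coeff_prodOneSubCMulX_cons a s 0, coeff_prodOneSubCMulX_cons a s 1,
      coeff_prodOneSubCMulX_cons a s 2, coeff_prodOneSubCMulX_cons a s 3,
      coeff_zero_prodOneSubCMulX]
    linear_combination ih

lemma sum_map_sub_pow_four (c : R) :
    (s.map fun b => (b - c) ^ 4).sum = powerSum 4 s - 4 * c * powerSum 3 s +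
      6 * c ^ 2 * powerSum 2 s - 4 * c ^ 3 * powerSum 1 s + c ^ 4 * Multiset.card s := by
  induction s using Multiset.induction_on with
  | empty => simp
  | cons a s ih =>
    simp only [Multiset.map_cons, Multiset.sum_cons, ih, powerSum_cons, Multiset.card_cons]
    push_cast
    ring

end PowerSums

section Field
variable {K : Type*} [Field K]

lemma prod_X_sub_C_comp_one_sub_X (s : Multiset K) (hs : ∀ z ∈ s, z ≠ 1) :
    (s.map (X - C ·)).prod.comp (1 - X) =
      C (s.map (1 - ·)).prod * prodOneSubCMulX (s.map fun z => (1 - z)⁻¹) := by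
  induction s using Multiset.induction_on with
  | empty => simp
  | cons a s ih =>
    have ha : 1 - a ≠ 0 := sub_ne_zero.mpr (hs a (Multiset.mem_cons_self a s)).symm
    simp only [Multiset.map_cons, Multiset.prod_cons, mul_comp, prodOneSubCMulX_cons,
      ih fun z hz => hs z (Multiset.mem_cons_of_mem hz), sub_comp, X_comp, C_comp, map_mul]
    have hfactor : (1 - X - C a : K[X]) = C (1 - a) * (1 - C (1 - a)⁻¹ * X) := by
      rw [mul_sub, mul_one, ← mul_assoc, ← C_mul, mul_inv_cancel₀ ha, C_1, one_mul, C_sub,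
        C_1]
      ring
    rw [hfactor]
    ring

lemma Polynomial.Splits.comp_one_sub_X_eq {f : K[X]} (hf : f.Splits) (h1 : f.eval 1 ≠ 0) :
    f.comp (1 - X) = C (f.eval 1) * prodOneSubCMulX (f.roots.map fun z => (1 - z)⁻¹) := by
  have hroots : ∀ z ∈ f.roots, z ≠ 1 := by
    rintro z hz rfl
    exact h1 (isRoot_of_mem_roots hz)
  conv_lhs => rw [hf.eq_prod_roots]
  rw [mul_comp, C_comp, prod_X_sub_C_comp_one_sub_X _ hroots, hf.eval_eq_prod_roots, C_mul,
    mul_assoc]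

end Field

lemma coeff_one_sub_X_pow {R : Type*} [CommRing R] (e k : ℕ) :
    ((1 - X : R[X]) ^ e).coeff k = (-1) ^ k * e.choose k := by
  induction e generalizing k with
  | zero => cases k <;> simp [coeff_one]
  | succ e ih =>
    cases k with
    | zero => simp [coeff_zero_eq_eval_zero]
    | succ k =>
      rw [pow_succ, mul_sub, mul_one, coeff_sub, coeff_mul_X, ih, ih, Nat.choose_succ_succ']
      push_cast
      ring

namespace Complex

lemma re_inv_one_sub_eq_half {z : ℂ} (hz : ‖z‖ = 1) (h1 : z ≠ 1) :
    ((1 - z)⁻¹).re = 2⁻¹ := by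
  have hsq : z.re * z.re + z.im * z.im = 1 := by
    rw [← normSq_apply, normSq_eq_norm_sq, hz, one_pow]
  have hre : z.re ≠ 1 := fun h => h1 (ext h (by simpa using (show z.im * z.im = 0 by nlinarith)))
  have hre' : 1 - z.re ≠ 0 := sub_ne_zero.mpr hre.symm
  rw [inv_re, normSq_apply]
  simp only [sub_re, one_re, sub_im, one_im]
  field_simp
  nlinarith

lemma pow_four_of_re_eq_zero {w : ℂ} (hw : w.re = 0) : w ^ 4 = ((w.im ^ 4 : ℝ) : ℂ) := by
  conv_lhs => rw [← re_add_im w, hw]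
  rw [ofReal_zero, zero_add, mul_pow, I_pow_four, mul_one]
  push_cast
  rfl

lemma re_sum_map_sub_half_pow_four_nonneg {s : Multiset ℂ} (hs : ∀ b ∈ s, b.re = 2⁻¹) :
    0 ≤ (s.map fun b => (b - 2⁻¹) ^ 4).sum.re := by
  induction s using Multiset.induction_on with
  | empty => simp
  | cons a s ih =>
    have ha : (a - 2⁻¹).re = 0 := by simp [hs a (Multiset.mem_cons_self a s)]
    rw [Multiset.map_cons, Multiset.sum_cons, add_re, pow_four_of_re_eq_zero ha, ofReal_re]
    exact add_nonneg (by positivity) (ih fun b hb => hs b (Multiset.mem_cons_of_mem hb))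

lemma norm_eq_one_of_mem_roots_one_add_X_sq_mul {Q : ℂ[X]} (hQ : Q ≠ 0)
    (hunit : ∀ z ∈ Q.roots, ‖z‖ = 1) {z : ℂ} (hz : z ∈ ((1 + X ^ 2) * Q).roots) :
    ‖z‖ = 1 := by
  have hroot : (1 + z ^ 2) * Q.eval z = 0 := by simpa using isRoot_of_mem_roots hz
  rcases mul_eq_zero.mp hroot with hsq | hQz
  · have hz2 : ‖z‖ ^ 2 = 1 := by
      rw [← norm_pow, eq_neg_of_add_eq_zero_right hsq, norm_neg, norm_one]
    exact (pow_eq_one_iff_of_nonneg (norm_nonneg z) two_ne_zero).mp hz2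
  · exact hunit z ((mem_roots hQ).mpr hQz)

end Complex

noncomputable def invOneSubRootsMoment (f : ℂ[X]) : ℂ :=
  ((f.roots.map fun z => (1 - z)⁻¹).map fun b => (b - 2⁻¹) ^ 4).sum

lemma re_invOneSubRootsMoment_nonneg {f : ℂ[X]} (h1 : f.eval 1 ≠ 0)
    (hunit : ∀ z ∈ f.roots, ‖z‖ = 1) : 0 ≤ (invOneSubRootsMoment f).re := by
  refine Complex.re_sum_map_sub_half_pow_four_nonneg fun b hb => ?_
  obtain ⟨z, hz, rfl⟩ := Multiset.mem_map.mp hb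
  refine Complex.re_inv_one_sub_eq_half (hunit z hz) ?_
  rintro rfl
  exact h1 (isRoot_of_mem_roots hz)

open Finset in
lemma one_add_sq_mul_alternating_sum {R : Type*} [CommRing R] (x : R) (m t : ℕ) :
    (1 + x ^ 2) * ∑ i ∈ range (2 * t + 1), (-1) ^ i * x ^ (m + 2 * (2 * t - i)) =
      x ^ (m + 4 * t + 2) + x ^ m := by
  induction t with
  | zero => rw [sum_range_one]; ring
  | succ t ih =>
    have hshift : ∀ i ∈ range (2 * t + 1),
        (-1 : R) ^ (i + 1 + 1) * x ^ (m + 2 * (2 * (t + 1) - (i + 1 + 1))) =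
          (-1) ^ i * x ^ (m + 2 * (2 * t - i)) := by
      intro i hi
      rw [show 2 * (t + 1) - (i + 1 + 1) = 2 * t - i by omega]
      ring
    rw [show 2 * (t + 1) + 1 = 2 * t + 1 + 1 + 1 by ring, sum_range_succ', sum_range_succ',
      sum_congr rfl hshift, zero_add, Nat.sub_zero, show 2 * (t + 1) - 1 = 2 * t + 1 by omega]
    linear_combination ih

/-- `R_{n,t} = (1 + X^2) P_{n,t}`, in which the alternating sum of `P_{n,t}` has collapsed. -/
noncomputable def Rpoly (n t : ℕ) : ℤ[X] :=
  X ^ (2 * n + 2) - X ^ (2 * n + 1) + X ^ (2 * n) - X ^ (2 * n - 1) + X ^ (n + 2 * t + 2) +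
    X ^ (n - 2 * t) - X ^ 3 + X ^ 2 - X + 1

open Finset in
lemma one_add_X_sq_mul_Ppoly {n t : ℕ} (h : 2 * t < n) : (1 + X ^ 2) * Ppoly n t = Rpoly n t := by
  have hsum : ∑ i ∈ range (2 * t + 1), (-1 : ℤ) ^ i • (X : ℤ[X]) ^ (n + 2 * t - 2 * i) =
      ∑ i ∈ range (2 * t + 1), (-1) ^ i * X ^ (n - 2 * t + 2 * (2 * t - i)) := by
    refine sum_congr rfl fun i hi => ?_
    rw [mem_range] at hi
    rw [zsmul_eq_mul, show n + 2 * t - 2 * i = n - 2 * t + 2 * (2 * t - i) by omega]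
    push_cast
    rfl
  have halt := one_add_sq_mul_alternating_sum (X : ℤ[X]) (n - 2 * t) t
  rw [show n - 2 * t + 4 * t + 2 = n + 2 * t + 2 by omega] at halt
  have hodd : (X : ℤ[X]) ^ (2 * n + 1) = X ^ 2 * X ^ (2 * n - 1) := by
    rw [← pow_add]; congr 1; omega
  rw [Ppoly, Rpoly, hsum]
  linear_combination halt + hodd

lemma natDegree_Rpoly {n t : ℕ} (h : 2 * t < n) : (Rpoly n t).natDegree = 2 * n + 2 := by
  set low : ℤ[X] := -X ^ (2 * n + 1) + X ^ (2 * n) - X ^ (2 * n - 1) + X ^ (n + 2 * t + 2) +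
    X ^ (n - 2 * t) - X ^ 3 + X ^ 2 - X + 1 with hlow
  have hsplit : Rpoly n t = X ^ (2 * n + 2) + low := by
    rw [Rpoly, hlow]; ring
  have hdeg : low.natDegree ≤ 2 * n + 1 := by
    rw [hlow]
    compute_degree
    omega
  rw [hsplit, natDegree_add_eq_left_of_natDegree_lt (by rw [natDegree_X_pow]; omega),
    natDegree_X_pow]

lemma natDegree_Ppoly {n t : ℕ} (h : 2 * t < n) : (Ppoly n t).natDegree = 2 * n := by
  have h2 : (1 + X ^ 2 : ℤ[X]).natDegree = 2 := by compute_degree!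
  have hR := natDegree_Rpoly h
  rw [← one_add_X_sq_mul_Ppoly h] at hR
  have hP : Ppoly n t ≠ 0 := by
    rintro hP
    simp [hP] at hR
  rw [natDegree_mul (by rintro h0; simp [h0] at h2) hP, h2] at hR
  omega

lemma eval_one_Rpoly (n t : ℕ) : (Rpoly n t).eval 1 = 2 := by
  simp [Rpoly]

lemma coeff_Rpoly_comp_one_sub_X (n t k : ℕ) :
    (((Rpoly n t).map (Int.castRingHom ℂ)).comp (1 - X)).coeff k = (-1) ^ k *
      ((2 * n + 2).choose k - (2 * n + 1).choose k + (2 * n).choose k - (2 * n - 1).choose k +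
        (n + 2 * t + 2).choose k + (n - 2 * t).choose k - (3 : ℕ).choose k + (2 : ℕ).choose k -
        (1 : ℕ).choose k + (0 : ℕ).choose k : ℂ) := by
  simp only [Rpoly, Polynomial.map_add, Polynomial.map_sub, Polynomial.map_pow, Polynomial.map_X,
    Polynomial.map_one, add_comp, sub_comp, pow_comp, X_comp, one_comp, coeff_add, coeff_sub,
    coeff_one_sub_X_pow]
  have h1 := coeff_one_sub_X_pow (R := ℂ) 1 k
  have h0 := coeff_one_sub_X_pow (R := ℂ) 0 k
  rw [pow_one, coeff_sub] at h1
  rw [pow_zero] at h0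
  linear_combination h0 - h1

noncomputable def rpolyMoment (n t : ℕ) : ℝ :=
  25 / 8 - 253 / 24 * n + 10 * n ^ 2 - 4 / 3 * n ^ 3 - 20 / 3 * t - 4 / 3 * t ^ 2 + 32 / 3 * t ^ 3 +
    16 / 3 * t ^ 4 + 16 * n * t * (t + 1)

lemma invOneSubRootsMoment_Rpoly {n t : ℕ} (h : 2 * t < n) :
    invOneSubRootsMoment ((Rpoly n t).map (Int.castRingHom ℂ)) = rpolyMoment n t := by
  set R := (Rpoly n t).map (Int.castRingHom ℂ)
  set s := R.roots.map fun z => (1 - z)⁻¹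
  have hR1 : R.eval 1 = 2 := by simp [R, eval_map, eval_one_Rpoly]
  have hsplit := IsAlgClosed.splits R
  have hcard : Multiset.card s = 2 * n + 2 := by
    rw [Multiset.card_map, splits_iff_card_roots.mp hsplit, natDegree_map_eq_of_injective
      (RingHom.injective_int _), natDegree_Rpoly h]
  have hcoeff (k : ℕ) : (prodOneSubCMulX s).coeff k = 2⁻¹ * (R.comp (1 - X)).coeff k := by
    rw [hsplit.comp_one_sub_X_eq (by rw [hR1]; exact two_ne_zero), hR1, coeff_C_mul,
      inv_mul_cancel_left₀ two_ne_zero]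
  have hodd : ((2 * n - 1 : ℕ) : ℂ) = 2 * n - 1 := by
    rw [Nat.cast_sub (by omega)]; push_cast; ring
  have hdiff : ((n - 2 * t : ℕ) : ℂ) = n - 2 * t := by
    rw [Nat.cast_sub h.le]; push_cast; ring
  obtain ⟨hd1, hd2, hd3, hd4⟩ :
      (prodOneSubCMulX s).coeff 1 = -(n + 1) ∧
      (prodOneSubCMulX s).coeff 2 = (n ^ 2 + 5 * n - 1) / 2 + 2 * t * (t + 1) ∧
      (prodOneSubCMulX s).coeff 3 = -n ^ 3 / 6 - 2 * n ^ 2 + 2 * n / 3 - 2 * n * t * (t + 1) ∧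
      (prodOneSubCMulX s).coeff 4 = n ^ 4 / 24 + 5 * n ^ 3 / 4 - 43 * n ^ 2 / 24 + 3 * n / 2 -
        1 / 2 + t / 6 + 5 * t ^ 2 / 6 + 4 * t ^ 3 / 3 + 2 * t ^ 4 / 3 +
        (n ^ 2 - n) * t * (t + 1) := by
    refine ⟨?_, ?_, ?_, ?_⟩ <;>
    · rw [hcoeff, coeff_Rpoly_comp_one_sub_X]
      simp only [Nat.cast_choose_eq_descPochhammer_div, descPochhammer_succ_right,
        descPochhammer_zero, eval_mul, eval_sub, eval_X, eval_one, eval_natCast, hodd, hdiff]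
      norm_num [Nat.factorial]
      ring
  rw [invOneSubRootsMoment, sum_map_sub_pow_four, powerSum_four_eq, powerSum_three_eq,
    powerSum_two_eq, powerSum_one_eq, hd1, hd2, hd3, hd4, hcard, rpolyMoment]
  push_cast
  ring

lemma rpolyMoment_neg {n t : ℕ} (hcube : 8 * (t + 1) ^ 3 ≤ n) (h80 : 80 ≤ n) :
    rpolyMoment n t < 0 := by
  have hn : (80 : ℝ) ≤ n := by exact_mod_cast h80
  have hu : 8 * ((t : ℝ) + 1) ^ 3 ≤ n := by exact_mod_cast hcube
  have ht : (0 : ℝ) ≤ t := t.cast_nonneg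
  have hu1 : (1 : ℝ) ≤ t + 1 := by linarith
  have hquad : 240 * (n : ℝ) ^ 2 ≤ 3 * n ^ 3 := by nlinarith
  have hsq : 64 * ((t : ℝ) + 1) ^ 2 ≤ (n : ℝ) ^ 2 := by
    nlinarith [pow_le_pow_left₀ (by positivity) hu1 3]
  have hmixed : 384 * (n : ℝ) * t * (t + 1) ≤ 6 * n ^ 3 := by nlinarith
  have hcub : 512 * ((t : ℝ) + 1) ^ 9 ≤ (n : ℝ) ^ 3 := by
    nlinarith [pow_le_pow_left₀ (by positivity) hu 3]
  have hquart : 128 * (t : ℝ) ^ 4 + 256 * t ^ 3 ≤ (n : ℝ) ^ 3 := by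
    nlinarith [pow_le_pow_right₀ hu1 (show 4 ≤ 9 by norm_num)]
  rw [rpolyMoment]
  nlinarith

theorem stmt_16 (t : ℕ) (n : ℕ) (hn : max (8*(t+1)^3) (40*(t+2)) ≤ n) :
    Multiset.card (((Ppoly n t).map (Int.castRingHom ℂ)).roots.filter
      (fun z => ‖z‖ = 1)) ≤ 2*n - 1 := by
  obtain ⟨hcube, hlin⟩ := max_le_iff.mp hn
  have ht : 2 * t < n := by omega
  set Q := (Ppoly n t).map (Int.castRingHom ℂ)
  set R := (Rpoly n t).map (Int.castRingHom ℂ)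
  have hRQ : R = (1 + X ^ 2) * Q := by simp [R, Q, ← one_add_X_sq_mul_Ppoly ht]
  have hQdeg : Q.natDegree = 2 * n := by
    rw [natDegree_map_eq_of_injective (RingHom.injective_int _), natDegree_Ppoly ht]
  have hQ : Q ≠ 0 := ne_zero_of_natDegree_gt (n := 0) (by omega)
  by_contra! hmany
  have hQunit : ∀ z ∈ Q.roots, ‖z‖ = 1 := Multiset.filter_eq_self.mp <|
    Multiset.eq_of_le_of_card_le (Multiset.filter_le _ _) (by have := card_roots' Q; omega)
  have hnonneg := re_invOneSubRootsMoment_nonneg (f := R) (by simp [R, eval_map, eval_one_Rpoly])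
    fun z hz => Complex.norm_eq_one_of_mem_roots_one_add_X_sq_mul hQ hQunit (hRQ ▸ hz)
  rw [invOneSubRootsMoment_Rpoly ht, Complex.ofReal_re] at hnonneg
  exact (rpolyMoment_neg hcube (by omega)).not_ge hnonneg
end

section
/- Let t be a nonnegative integer and n an integer with n ≥ max(8(t+1)^3, 40(t+2)). Then the finite set G_{n,t} is a minimal generating set of S_{n,t} of cardinality n−3t−1: the additive submonoid of ℕ generated by G_{n,t} equals S_{n,t}, for every g ∈ G_{n,t} the element g does not belong to the additive submonoid generated by G_{n,t} \ {g}, and |G_{n,t}| = n−3t−1. In particular S_{n,t} has embedding dimension n−3t−1. -/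
/-!
Every generator lies in `[n - 2t, 3(n - 2t))`, so a generator that is a sum of other generators is a
sum of exactly two of them. A sum of two generators is at least `2n` unless both come from the first
block, and then it is `2n - 4t + 4k + s` with `s ≤ 2`: never `≡ 2n - 4t - 1 (mod 4)`, the residue of
the only generators above `2n - 4t`.
-/

theorem AddSubmonoid.mem_closure_nat_cases {T : Set ℕ} {a : ℕ} (hT : ∀ x ∈ T, a ≤ x) {x : ℕ}
    (hx : x ∈ closure T) :
    x = 0 ∨ x ∈ T ∨ (∃ y ∈ T, ∃ z ∈ T, x = y + z) ∨ 3 * a ≤ x := by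
  induction hx using closure_induction with
  | mem x hx => exact Or.inr (Or.inl hx)
  | zero => exact Or.inl rfl
  | add x y _ _ ihx ihy =>
    have coarse : ∀ {z : ℕ}, (z = 0 ∨ z ∈ T ∨ (∃ u ∈ T, ∃ w ∈ T, z = u + w) ∨ 3 * a ≤ z) →
        z = 0 ∨ z ∈ T ∨ 2 * a ≤ z := by
      rintro z (h | h | ⟨u, hu, w, hw, rfl⟩ | h)
      · exact Or.inl h
      · exact Or.inr (Or.inl h)
      · exact Or.inr (Or.inr (by linarith [hT u hu, hT w hw]))
      · exact Or.inr (Or.inr (by omega))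
    rcases coarse ihx with rfl | hx | hx
    · simpa using ihy
    all_goals rcases coarse ihy with rfl | hy | hy
    · simpa using ihx
    · exact Or.inr (Or.inr (Or.inl ⟨x, hx, y, hy, rfl⟩))
    · exact Or.inr (Or.inr (Or.inr (by linarith [hT x hx])))
    · simpa using ihx
    · exact Or.inr (Or.inr (Or.inr (by linarith [hT y hy])))
    · exact Or.inr (Or.inr (Or.inr (by omega)))

section

variable {n t : ℕ}

theorem Gset_subset_Ico (hn : 6*t + 2 ≤ n) : Gset n t ⊆ Set.Ico (n - 2*t) (3*(n - 2*t)) := by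
  rintro m (⟨i, hi, rfl | rfl⟩ | ⟨hm₁, hm₂⟩ | ⟨j, hj, rfl⟩) <;> simp only [Set.mem_Ico] <;> omega

theorem add_notMem_Gset (hn : 6*t + 2 ≤ n) {x y : ℕ} (hx : x ∈ Gset n t) (hy : y ∈ Gset n t) :
    x + y ∉ Gset n t := by
  intro hxy
  have hx_lo := (Gset_subset_Ico hn hx).1
  have hy_lo := (Gset_subset_Ico hn hy).1
  obtain ⟨j, hj, hsum⟩ : ∃ j < t, x + y = 2*n - 4*t + 4*j - 1 := by
    rcases hxy with ⟨k, hk, h | h⟩ | h | h <;> first | exact h | omega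
  rcases hx with ⟨i, hi, rfl | rfl⟩ | ⟨hx₁, hx₂⟩ | ⟨i, hi, rfl⟩ <;>
    rcases hy with ⟨i', hi', rfl | rfl⟩ | ⟨hy₁, hy₂⟩ | ⟨i', hi', rfl⟩ <;> omega

theorem notMem_closure_Gset_diff (hn : 6*t + 2 ≤ n) {g : ℕ} (hg : g ∈ Gset n t) :
    g ∉ AddSubmonoid.closure (Gset n t \ {g}) := by
  intro hmem
  have hg_bounds := Gset_subset_Ico hn hg
  rcases AddSubmonoid.mem_closure_nat_cases (fun x hx => (Gset_subset_Ico hn hx.1).1) hmem with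
    h | h | ⟨x, hx, y, hy, rfl⟩ | h
  · simp only [h, Set.mem_Ico] at hg_bounds; omega
  · exact h.2 rfl
  · exact add_notMem_Gset hn hx.1 hy.1 hg
  · exact absurd hg_bounds.2 (not_lt.2 h)

open Finset in
theorem Gset_eq_coe : Gset n t =
    ↑((range t).image (fun i => n - 2*t + 4*i) ∪ (range t).image (fun i => n - 2*t + 4*i + 1) ∪
      Icc (n + 2*t) (2*n - 4*t - 2) ∪ (range t).image (fun j => 2*n - 4*t + 4*j - 1)) := by
  ext m
  simp only [Gset, Set.mem_ofPred_eq, coe_union, coe_image, coe_range, coe_Icc, Set.mem_union,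
    Set.mem_image, Set.mem_Iio, Set.mem_Icc]
  aesop

open Finset in
theorem ncard_Gset (hn : 6*t + 2 ≤ n) : (Gset n t).ncard = n - 3*t - 1 := by
  rw [Gset_eq_coe, Set.ncard_coe_finset, card_union_of_disjoint, card_union_of_disjoint,
    card_union_of_disjoint, card_image_of_injective, card_image_of_injective,
    card_image_of_injective, card_range, Nat.card_Icc]
  · omega
  all_goals first
    | intro a b h; dsimp only at h; omega
    | simp only [disjoint_left, mem_union, mem_image, mem_range, mem_Icc]; omega

end

theorem stmt_18 (t : ℕ) (n : ℕ) (hn : max (8*(t+1)^3) (40*(t+2)) ≤ n) :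
    AddSubmonoid.closure (Gset n t) = Sgen n t ∧
    (∀ g ∈ Gset n t, g ∉ AddSubmonoid.closure (Gset n t \ {g})) ∧
    (Gset n t).ncard = n - 3*t - 1 := by
  have hn' : 6*t + 2 ≤ n := by have := le_of_max_le_right hn; omega
  exact ⟨rfl, fun g hg => notMem_closure_Gset_diff hn' hg, ncard_Gset hn'⟩
end

section
/- For every integer n ≥ 12 and every complex number z with z^{2n} − z^{2n−1} + z^{n} − z + 1 = 0, we have 1 − (log n)²/n ≤ |z| ≤ 1 + (log n)²/n. -/
/-!
The polynomial is self-reciprocal, `z ^ (2n) P(1/z) = P(z)`, so its roots are closed under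
`z ↦ z⁻¹` and it suffices to bound `‖z‖` from above. For a root with `r = ‖z‖ > 1` the equation
`z ^ (2n) = z ^ (2n-1) - z ^ n + z - 1` and the triangle inequality give
`r ^ (2n) ≤ r ^ (2n-1) + 3 r ^ n`, i.e. `r ^ (n-1) (r - 1) ≤ 3`. With `ε = (log n)² / n` and
`log (1 + ε) ≥ ε / 2`, the value of `r ^ (n-1) (r - 1)` at `r = 1 + ε` is at least
`ε exp ((n-1) ε / 2) ≥ (log n)² exp ((11/24) (log n)² - log n) > 3` once `log n ≥ 9/4`.
-/

open Real

def semigroupPoly {R : Type*} [Ring R] (n : ℕ) (z : R) : R :=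
  z ^ (2 * n) - z ^ (2 * n - 1) + z ^ n - z + 1

section Roots

variable {K : Type*} {n : ℕ}

lemma ne_zero_of_semigroupPoly_eq_zero [Ring K] [Nontrivial K] (hn : 1 ≤ n) {z : K}
    (hz : semigroupPoly n z = 0) : z ≠ 0 := by
  rintro rfl
  simp [semigroupPoly, zero_pow, show n ≠ 0 by omega, show 2 * n - 1 ≠ 0 by omega] at hz

lemma semigroupPoly_inv [Field K] (hn : 1 ≤ n) {z : K} (hz : z ≠ 0) :
    semigroupPoly n z⁻¹ = z⁻¹ ^ (2 * n) * semigroupPoly n z := by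
  obtain ⟨m, rfl⟩ : ∃ m, n = m + 1 := ⟨n - 1, by omega⟩
  rw [semigroupPoly, semigroupPoly, show 2 * (m + 1) - 1 = 2 * m + 1 by omega]
  simp only [inv_pow]
  field_simp
  ring

lemma semigroupPoly_inv_eq_zero [Field K] (hn : 1 ≤ n) {z : K} (hz : semigroupPoly n z = 0) :
    semigroupPoly n z⁻¹ = 0 := by
  rw [semigroupPoly_inv hn (ne_zero_of_semigroupPoly_eq_zero hn hz), hz, mul_zero]

lemma norm_pow_pred_mul_sub_one_le_three [NormedField K] (hn : 1 ≤ n) {z : K}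
    (hz : semigroupPoly n z = 0) (h1 : 1 ≤ ‖z‖) : ‖z‖ ^ (n - 1) * (‖z‖ - 1) ≤ 3 := by
  obtain ⟨m, rfl⟩ : ∃ m, n = m + 1 := ⟨n - 1, by omega⟩
  rw [Nat.add_sub_cancel]
  set r := ‖z‖
  have htop : z ^ (2 * m + 2) = z ^ (2 * m + 1) - z ^ (m + 1) + z - 1 := by
    rw [semigroupPoly, show 2 * (m + 1) - 1 = 2 * m + 1 by omega] at hz
    linear_combination hz
  have htri : r ^ (2 * m + 2) ≤ r ^ (2 * m + 1) + r ^ (m + 1) + r + 1 := by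
    calc r ^ (2 * m + 2) = ‖z ^ (2 * m + 1) - z ^ (m + 1) + z - 1‖ := by rw [← htop, norm_pow]
      _ ≤ ‖z ^ (2 * m + 1) - z ^ (m + 1)‖ + ‖z‖ + ‖(1 : K)‖ := by
        grw [norm_sub_le, norm_add_le]
      _ ≤ ‖z ^ (2 * m + 1)‖ + ‖z ^ (m + 1)‖ + ‖z‖ + ‖(1 : K)‖ := by grw [norm_sub_le]
      _ = r ^ (2 * m + 1) + r ^ (m + 1) + r + 1 := by rw [norm_pow, norm_pow, norm_one]
  have hr : r ≤ r ^ (m + 1) := le_self_pow₀ h1 (by omega)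
  have hr1 : 1 ≤ r ^ (m + 1) := one_le_pow₀ h1
  have hdiv : r ^ (m + 1) ≤ r ^ m + 3 := by
    refine le_of_mul_le_mul_left ?_ (by positivity : 0 < r ^ (m + 1))
    have hsplit : r ^ (2 * m + 2) = r ^ (m + 1) * r ^ (m + 1) := by ring
    have hsplit' : r ^ (2 * m + 1) = r ^ (m + 1) * r ^ m := by ring
    linarith
  rw [pow_succ] at hdiv
  linarith

end Roots

lemma nine_div_four_le_log {n : ℕ} (hn : 12 ≤ n) : 9 / 4 ≤ log n := by
  rw [le_log_iff_exp_le (by positivity)]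
  have h12 : (12 : ℝ) ≤ n := by exact_mod_cast hn
  refine le_trans ?_ h12
  rw [← pow_le_pow_iff_left₀ (exp_pos _).le (by norm_num) (by norm_num : (4 : ℕ) ≠ 0),
    ← exp_nat_mul, show ((4 : ℕ) : ℝ) * (9 / 4) = (9 : ℕ) * 1 by norm_num, exp_nat_mul]
  calc exp 1 ^ 9 ≤ 2.7182818286 ^ 9 := by gcongr; exact exp_one_lt_d9.le
    _ ≤ 12 ^ 4 := by norm_num

lemma sq_log_le_two_mul {x : ℝ} (hx : 1 ≤ x) : log x ^ 2 ≤ 2 * x := by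
  have := quadratic_le_exp_of_nonneg (log_nonneg hx)
  rw [exp_log (by linarith)] at this
  linarith [log_nonneg hx]

lemma exp_mul_half_le_one_add_pow {ε : ℝ} (hε0 : 0 ≤ ε) (hε2 : ε ≤ 2) (m : ℕ) :
    exp (m * (ε / 2)) ≤ (1 + ε) ^ m := by
  rw [exp_nat_mul]
  gcongr
  rw [← le_log_iff_exp_le (by linarith)]
  refine le_trans ?_ (le_log_one_add_of_nonneg hε0)
  rw [le_div_iff₀ (by linarith)]
  nlinarith

lemma three_lt_log_sq_div_mul_one_add_pow {n : ℕ} (hn : 12 ≤ n) :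
    3 < log n ^ 2 / n * (1 + log n ^ 2 / n) ^ (n - 1) := by
  have hL := nine_div_four_le_log hn
  have h12 : (12 : ℝ) ≤ n := by exact_mod_cast hn
  set L := log n
  set ε := L ^ 2 / n with hεdef
  have hε0 : 0 ≤ ε := by positivity
  have hε2 : ε ≤ 2 := by
    rw [div_le_iff₀ (by positivity)]
    exact sq_log_le_two_mul (by linarith)
  have hexp : exp L = n := exp_log (by positivity)
  have harg : 11 / 24 * L ^ 2 ≤ (n - 1 : ℕ) * (ε / 2) := by
    have hεn : ε * n = L ^ 2 := by rw [hεdef]; field_simp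
    rw [Nat.cast_sub (by omega), Nat.cast_one]
    nlinarith [mul_nonneg (sub_nonneg.mpr h12) hε0]
  calc (3 : ℝ) < L ^ 2 := by nlinarith
    _ ≤ L ^ 2 * exp (11 / 24 * L ^ 2 - L) :=
      le_mul_of_one_le_right (sq_nonneg L) (one_le_exp (by nlinarith))
    _ = ε * exp (11 / 24 * L ^ 2) := by
      rw [exp_sub, hexp, hεdef]
      field_simp
    _ ≤ ε * exp ((n - 1 : ℕ) * (ε / 2)) := by gcongr
    _ ≤ ε * (1 + ε) ^ (n - 1) := by gcongr; exact exp_mul_half_le_one_add_pow hε0 hε2 _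

lemma norm_le_one_add_of_semigroupPoly_eq_zero {K : Type*} [NormedField K] {n : ℕ} (hn : 12 ≤ n)
    {z : K} (hz : semigroupPoly n z = 0) : ‖z‖ ≤ 1 + log n ^ 2 / n := by
  set ε := log n ^ 2 / n
  have hε0 : 0 ≤ ε := by positivity
  by_contra! h
  have hroot := norm_pow_pred_mul_sub_one_le_three (by omega) hz (by linarith)
  have hgrowth : ε * (1 + ε) ^ (n - 1) ≤ ‖z‖ ^ (n - 1) * (‖z‖ - 1) := by
    rw [mul_comm]
    gcongr
    linarith
  linarith [three_lt_log_sq_div_mul_one_add_pow hn]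

theorem stmt_19 (n : ℕ) (hn : 12 ≤ n) (z : ℂ)
    (hz : z^(2*n) - z^(2*n-1) + z^n - z + 1 = 0) :
    1 - (Real.log n)^2 / n ≤ ‖z‖ ∧ ‖z‖ ≤ 1 + (Real.log n)^2 / n := by
  refine ⟨?_, norm_le_one_add_of_semigroupPoly_eq_zero hn hz⟩
  have hpos : 0 < ‖z‖ := norm_pos_iff.mpr (ne_zero_of_semigroupPoly_eq_zero (by omega) hz)
  have hinv := norm_le_one_add_of_semigroupPoly_eq_zero hn (semigroupPoly_inv_eq_zero (by omega) hz)
  rw [norm_inv, inv_le_iff_one_le_mul₀ hpos] at hinv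
  have hε : 0 ≤ log n ^ 2 / n := by positivity
  nlinarith [mul_nonneg (sq_nonneg (log n ^ 2 / n)) hpos.le]
end
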